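/- arXiv:math/0211303 — 3 statements merged into one kernel-verified Lean document; each statement's English description precedes it below -/
import Mathlib

section
/- Let G be a finite connected weighted graph (electrical network), let A and B be disjoint nonempty sets of vertices, and let z be a vertex not in A ∪ B. Let τ_A and τ_B be the hitting times of A and B for the weighted random walk started at z. Then P(τ_B < τ_A) ≤ C(z,B)/C(z,A), where C(z,D) denotes the effective conductance between z and the set D. -/
open MeasureTheory

/-- First hitting time (from time 0) of a set `D` by the trajectory `ω`. -/
noncomputable def hitTime {V : Type*} (D : Set V) (ω : ℕ → V) : ℕ∞ :=
  sInf {n : ℕ∞ | ∃ k : ℕ, n = (k : ℕ∞) ∧ ω k ∈ D}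

/-- First hitting time from time 1 onwards of a set `D` by the trajectory `ω`. -/
noncomputable def hitTimePos {V : Type*} (D : Set V) (ω : ℕ → V) : ℕ∞ :=
  sInf {n : ℕ∞ | ∃ k : ℕ, n = (k : ℕ∞) ∧ 1 ≤ k ∧ ω k ∈ D}

/-!
Let `e_D = P_z(τ⁺_D < τ⁺_z)`, so that `C(z,D) = π(z) e_D`. It is the total probability of the
escape paths from `z` into `D`, which enter `D` at their last step and never return to `z`. Let `G`
be the total probability of the loops at `z` avoiding `A`, i.e. the expected number of visits to
`z` before `τ_A`. Cutting a trajectory at its last visit to `z` before `τ_B` gives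
`P_z(τ_B < τ_A) ≤ G e_B`. A loop avoiding `A` followed by an escape path into `A` enters `A` for
the first time at its end, and the loop is recovered as the part up to the last visit to `z`, so
these concatenations have disjoint cylinders and `G e_A ≤ 1`. Hence `P_z(τ_B < τ_A) e_A ≤ e_B`.

The σ-algebra on the vertices is arbitrary, but its singletons are measurable: if no measurable
set separated `b` from `c`, a step to `c` could not be told from a step to `b`, and every
transition probability into `c` would vanish, contradicting connectivity.
-/

open scoped ENNReal

theorem ENNReal.tsum_mul_tsum {α β : Type*} (f : α → ℝ≥0∞) (g : β → ℝ≥0∞) :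
    (∑' a, f a) * ∑' b, g b = ∑' x : α × β, f x.1 * g x.2 := by
  rw [ENNReal.tsum_prod', ← ENNReal.tsum_mul_right]
  simp_rw [ENNReal.tsum_mul_left]

theorem Relation.ReflTransGen.exists_seq {α : Type*} {r : α → α → Prop} {a b : α}
    (h : Relation.ReflTransGen r a b) :
    ∃ (n : ℕ) (q : ℕ → α), q 0 = a ∧ q n = b ∧ ∀ k < n, r (q k) (q (k + 1)) := by
  induction h with
  | refl => exact ⟨0, fun _ => a, rfl, rfl, fun _ h => absurd h (Nat.not_lt_zero _)⟩
  | @tail b c _ hbc ih =>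
    obtain ⟨n, q, hq0, hqn, hq⟩ := ih
    refine ⟨n + 1, fun k => if k ≤ n then q k else c, by simpa using hq0, by simp, fun k hk => ?_⟩
    rcases Nat.lt_succ_iff_lt_or_eq.1 hk with hk | rfl
    · simpa [hk.le, Nat.succ_le_of_lt hk] using hq k hk
    · simpa [hqn] using hbc

namespace RandomWalk

variable {V : Type*}

section HittingTimes

theorem sInf_natCast_lt_sInf_natCast_iff {p q : ℕ → Prop} :
    sInf {n : ℕ∞ | ∃ k : ℕ, n = k ∧ p k} < sInf {n : ℕ∞ | ∃ k : ℕ, n = k ∧ q k} ↔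
      ∃ k, p k ∧ ∀ j ≤ k, ¬ q j := by
  set P := {n : ℕ∞ | ∃ k : ℕ, n = k ∧ p k}
  set Q := {n : ℕ∞ | ∃ k : ℕ, n = k ∧ q k}
  constructor
  · intro h
    obtain ⟨_, ⟨k, rfl, hk⟩, hlt⟩ := sInf_lt_iff.1 h
    refine ⟨k, hk, fun j hj hqj => ?_⟩
    have : (k : ℕ∞) < j := hlt.trans_le (sInf_le (s := Q) ⟨j, rfl, hqj⟩)
    exact absurd hj (by exact_mod_cast this.not_ge)
  · rintro ⟨k, hk, hq⟩
    refine (sInf_le (s := P) ⟨k, rfl, hk⟩).trans_lt (not_le.1 fun hle => ?_)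
    have hne : Q.Nonempty := by
      by_contra hemp
      simp [Q, Set.not_nonempty_iff_eq_empty.1 hemp] at hle
    obtain ⟨j, hj, hqj⟩ := csInf_mem hne
    rw [hj] at hle
    exact hq j (by exact_mod_cast hle) hqj

variable {D D' : Set V} {ω : ℕ → V}

theorem hitTime_lt_hitTime_iff :
    hitTime D ω < hitTime D' ω ↔ ∃ n, ω n ∈ D ∧ ∀ j ≤ n, ω j ∉ D' :=
  sInf_natCast_lt_sInf_natCast_iff

theorem hitTimePos_lt_hitTimePos_iff :
    hitTimePos D ω < hitTimePos D' ω ↔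
      ∃ n, (1 ≤ n ∧ ω n ∈ D) ∧ ∀ j ≤ n, ¬ (1 ≤ j ∧ ω j ∈ D') :=
  sInf_natCast_lt_sInf_natCast_iff

end HittingTimes

def cylinder (n : ℕ) (p : ℕ → V) : Set (ℕ → V) := {ω | ∀ k ≤ n, ω k = p k}

noncomputable def pathProb (P : V → V → ℝ≥0∞) (n : ℕ) (p : ℕ → V) : ℝ≥0∞ :=
  ∏ k ∈ Finset.range n, P (p k) (p (k + 1))

def IsMarkovLaw [MeasurableSpace V] (P : V → V → ℝ≥0∞) (μ : V → Measure (ℕ → V)) : Prop :=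
  ∀ n (p : ℕ → V), μ (p 0) (cylinder n p) = pathProb P n p

theorem measurableSet_cylinder [MeasurableSpace V] [MeasurableSingletonClass V]
    (n : ℕ) (p : ℕ → V) : MeasurableSet (cylinder n p) := by
  simp only [cylinder, Set.ofPred_forall]
  exact .iInter fun k => .iInter fun _ =>
    measurableSet_singleton (p k) |>.preimage (measurable_pi_apply k)

abbrev FinPath (V : Type*) := Σ n : ℕ, Fin (n + 1) → V

namespace FinPath

def toFun (γ : FinPath V) (k : ℕ) : V := γ.2 ⟨min k γ.1, by omega⟩

def ofFun (n : ℕ) (p : ℕ → V) : FinPath V := ⟨n, fun i => p i⟩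

@[simp] theorem ofFun_fst (n : ℕ) (p : ℕ → V) : (ofFun n p).1 = n := rfl

theorem toFun_ofFun {n k : ℕ} {p : ℕ → V} (h : k ≤ n) : (ofFun n p).toFun k = p k := by
  simp [toFun, ofFun, Nat.min_eq_left h]

theorem ext_toFun {γ δ : FinPath V} (hlen : γ.1 = δ.1) (h : ∀ k ≤ γ.1, γ.toFun k = δ.toFun k) :
    γ = δ := by
  obtain ⟨n, f⟩ := γ
  obtain ⟨m, g⟩ := δ
  obtain rfl : n = m := hlen
  congr 1
  funext i
  simpa [toFun, Nat.min_eq_left (Nat.lt_succ_iff.1 i.2)] using h i (Nat.lt_succ_iff.1 i.2)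

def cyl (γ : FinPath V) : Set (ℕ → V) := cylinder γ.1 γ.toFun

noncomputable def prob (P : V → V → ℝ≥0∞) (γ : FinPath V) : ℝ≥0∞ := pathProb P γ.1 γ.toFun

theorem mem_cyl_ofFun {n : ℕ} {ω : ℕ → V} : ω ∈ (ofFun n ω).cyl :=
  fun _ hk => (toFun_ofFun hk).symm

theorem eq_of_mem_cyl {γ δ : FinPath V} {ω : ℕ → V} (hγ : ω ∈ γ.cyl) (hδ : ω ∈ δ.cyl)
    (hlen : γ.1 = δ.1) : γ = δ :=
  ext_toFun hlen fun k hk => (hγ k hk).symm.trans (hδ k (hlen ▸ hk))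

def append (γ δ : FinPath V) : FinPath V :=
  ofFun (γ.1 + δ.1) fun k => if k ≤ γ.1 then γ.toFun k else δ.toFun (k - γ.1)

variable {γ δ : FinPath V}

@[simp] theorem append_fst : (γ.append δ).1 = γ.1 + δ.1 := rfl

theorem toFun_append_left {k : ℕ} (hk : k ≤ γ.1) : (γ.append δ).toFun k = γ.toFun k := by
  rw [append, toFun_ofFun (by omega), if_pos hk]

theorem toFun_append_right (h : δ.toFun 0 = γ.toFun γ.1) {j : ℕ} (hj : j ≤ δ.1) :
    (γ.append δ).toFun (γ.1 + j) = δ.toFun j := by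
  rw [append, toFun_ofFun (by omega)]
  split_ifs with hle
  · obtain rfl : j = 0 := by omega
    simpa using h.symm
  · simp

theorem mem_cyl_append (h : δ.toFun 0 = γ.toFun γ.1) {ω : ℕ → V} :
    ω ∈ (γ.append δ).cyl ↔ ω ∈ γ.cyl ∧ (fun j => ω (γ.1 + j)) ∈ δ.cyl := by
  constructor
  · intro hω
    refine ⟨fun k hk => ?_, fun j hj => ?_⟩
    · rw [hω k (by simp; omega), toFun_append_left hk]
    · exact (hω _ (by simp; omega)).trans (toFun_append_right h hj)
  · rintro ⟨hγ, hδ⟩ k hk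
    rcases le_or_gt k γ.1 with hk' | hk'
    · rw [hγ k hk', toFun_append_left hk']
    · obtain ⟨j, rfl⟩ := Nat.exists_eq_add_of_lt hk'
      rw [append_fst] at hk
      rw [show γ.1 + j + 1 = γ.1 + (j + 1) by omega, toFun_append_right h (by omega)]
      exact hδ _ (by omega)

theorem prob_append (P : V → V → ℝ≥0∞) (h : δ.toFun 0 = γ.toFun γ.1) :
    (γ.append δ).prob P = γ.prob P * δ.prob P := by
  rw [prob, pathProb, append_fst, Finset.prod_range_add]
  congr 1
  · refine Finset.prod_congr rfl fun k hk => ?_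
    rw [Finset.mem_range] at hk
    rw [toFun_append_left hk.le, toFun_append_left hk]
  · refine Finset.prod_congr rfl fun j hj => ?_
    rw [Finset.mem_range] at hj
    rw [toFun_append_right h hj.le, add_assoc, toFun_append_right h hj]

end FinPath

open FinPath

def IsFirstEntrance (E : Set V) (n : ℕ) (ω : ℕ → V) : Prop := ω n ∈ E ∧ ∀ k < n, ω k ∉ E

def IsLoopAvoiding (z : V) (A : Set V) (γ : FinPath V) : Prop :=
  γ.toFun 0 = z ∧ γ.toFun γ.1 = z ∧ ∀ k ≤ γ.1, γ.toFun k ∉ A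

def IsEscapePath (z : V) (E : Set V) (γ : FinPath V) : Prop :=
  γ.toFun 0 = z ∧ IsFirstEntrance E γ.1 γ.toFun ∧ ∀ k, 0 < k → k ≤ γ.1 → γ.toFun k ≠ z

variable {z : V} {A B E : Set V} {ω : ℕ → V} {m n : ℕ}

theorem IsLoopAvoiding.escape_start {u e : FinPath V} (hu : IsLoopAvoiding z A u)
    (he : IsEscapePath z E e) : e.toFun 0 = u.toFun u.1 :=
  he.1.trans hu.2.1.symm

theorem IsFirstEntrance.unique (hn : IsFirstEntrance E n ω) (hm : IsFirstEntrance E m ω) :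
    n = m :=
  le_antisymm (not_lt.1 fun h => hn.2 m h hm.1) (not_lt.1 fun h => hm.2 n h hn.1)

theorem exists_isFirstEntrance_le (h : ω n ∈ E) : ∃ m ≤ n, IsFirstEntrance E m ω := by
  classical
  have hex : ∃ k, ω k ∈ E := ⟨n, h⟩
  exact ⟨Nat.find hex, Nat.find_min' hex h, Nat.find_spec hex, fun _ => Nat.find_min hex⟩

theorem isFirstEntrance_iff_of_mem_cyl {γ : FinPath V} (hω : ω ∈ γ.cyl) :
    IsFirstEntrance E γ.1 ω ↔ IsFirstEntrance E γ.1 γ.toFun := by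
  simp only [IsFirstEntrance]
  rw [hω _ le_rfl]
  refine and_congr_right' (forall₂_congr fun k hk => ?_)
  rw [hω k hk.le]

theorem pairwise_disjoint_cyl {ι : Type*} {f : ι → FinPath V} (hf : Function.Injective f)
    (hE : ∀ i, IsFirstEntrance E (f i).1 (f i).toFun) :
    Pairwise (Function.onFun Disjoint fun i => (f i).cyl) := by
  refine fun i j hij => Set.disjoint_left.2 fun ω hi hj => hij (hf ?_)
  refine eq_of_mem_cyl hi hj (IsFirstEntrance.unique (E := E) (ω := ω) ?_ ?_)
  · exact (isFirstEntrance_iff_of_mem_cyl hi).2 (hE i)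
  · exact (isFirstEntrance_iff_of_mem_cyl hj).2 (hE j)

/-- The last visit to `z` before the first entrance into `E` starts an escape path. -/
theorem exists_isEscapePath_shift (h0 : ω 0 = z) (hm : IsFirstEntrance E m ω) :
    ∃ t ≤ m, ω t = z ∧ IsEscapePath z E (ofFun (m - t) fun j => ω (t + j)) := by
  classical
  set t := Nat.findGreatest (ω · = z) m
  have htz : ω t = z := Nat.findGreatest_spec (P := (ω · = z)) (Nat.zero_le m) h0
  have htm : t ≤ m := Nat.findGreatest_le m
  have hlast : ∀ k, t < k → k ≤ m → ω k ≠ z := fun _ => Nat.findGreatest_is_greatest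
  clear_value t
  refine ⟨t, htm, htz, by simpa [toFun_ofFun] using htz, ?_, fun k hk hkm => ?_⟩
  · refine (isFirstEntrance_iff_of_mem_cyl mem_cyl_ofFun).1 ⟨?_, fun k hk => ?_⟩
    · simpa [Nat.add_sub_cancel' htm] using hm.1
    · rw [ofFun_fst] at hk
      exact hm.2 _ (by omega)
  · rw [ofFun_fst] at hkm
    rw [toFun_ofFun hkm]
    exact hlast _ (by omega) (by omega)

theorem hitTimePos_lt_of_mem_cyl (hzE : z ∉ E) {γ : FinPath V} (hγ : IsEscapePath z E γ)
    (hω : ω ∈ γ.cyl) :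
    hitTimePos E ω < hitTimePos {z} ω := by
  have hE := (isFirstEntrance_iff_of_mem_cyl hω).2 hγ.2.1
  refine hitTimePos_lt_hitTimePos_iff.2 ⟨γ.1, ⟨?_, hE.1⟩, fun j hj ⟨hj1, hjz⟩ => ?_⟩
  · by_contra! h0
    exact hzE (hγ.1 ▸ Nat.lt_one_iff.1 h0 ▸ hγ.2.1.1)
  · exact hγ.2.2 j hj1 hj ((hω j hj).symm.trans hjz)

theorem mem_iUnion_cyl_of_hitTimePos_lt (h0 : ω 0 = z)
    (h : hitTimePos E ω < hitTimePos {z} ω) :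
    ω ∈ ⋃ γ : {γ : FinPath V // IsEscapePath z E γ}, γ.1.cyl := by
  obtain ⟨n, ⟨-, hnE⟩, hnz⟩ := hitTimePos_lt_hitTimePos_iff.1 h
  obtain ⟨m, hmn, hm⟩ := exists_isFirstEntrance_le hnE
  refine Set.mem_iUnion.2 ⟨⟨ofFun m ω, by simpa [toFun_ofFun] using h0,
    (isFirstEntrance_iff_of_mem_cyl mem_cyl_ofFun).1 hm, fun k hk hkm => ?_⟩, mem_cyl_ofFun⟩
  rw [ofFun_fst] at hkm
  rw [toFun_ofFun hkm]
  exact fun hkz => hnz k (by omega) ⟨hk, hkz⟩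

theorem mem_iUnion_cyl_append_of_hitTime_lt (h0 : ω 0 = z) (h : hitTime B ω < hitTime A ω) :
    ω ∈ ⋃ x : {u : FinPath V // IsLoopAvoiding z A u} × {e : FinPath V // IsEscapePath z B e},
      (x.1.1.append x.2.1).cyl := by
  obtain ⟨n, hnB, hnA⟩ := hitTime_lt_hitTime_iff.1 h
  obtain ⟨m, hmn, hm⟩ := exists_isFirstEntrance_le hnB
  obtain ⟨t, htm, htz, he⟩ := exists_isEscapePath_shift h0 hm
  have hloop : IsLoopAvoiding z A (ofFun t ω) := by
    refine ⟨by simpa [toFun_ofFun] using h0, by simpa [toFun_ofFun] using htz, fun k hk => ?_⟩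
    rw [ofFun_fst] at hk
    rw [toFun_ofFun hk]
    exact hnA k (by omega)
  refine Set.mem_iUnion.2 ⟨(⟨_, hloop⟩, ⟨_, he⟩), ?_⟩
  exact (mem_cyl_append (hloop.escape_start he)).2 ⟨mem_cyl_ofFun, mem_cyl_ofFun⟩

theorem isFirstEntrance_append {u e : FinPath V} (hu : IsLoopAvoiding z A u)
    (he : IsEscapePath z A e) : IsFirstEntrance A (u.append e).1 (u.append e).toFun := by
  have hue := hu.escape_start he
  refine ⟨by simpa [toFun_append_right hue le_rfl] using he.2.1.1, fun k hk => ?_⟩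
  rcases le_or_gt k u.1 with hku | hku
  · rw [toFun_append_left hku]
    exact hu.2.2 k hku
  · obtain ⟨j, rfl⟩ := Nat.exists_eq_add_of_lt hku
    rw [append_fst] at hk
    rw [add_assoc, toFun_append_right hue (by omega)]
    exact he.2.1.2 _ (by omega)

theorem toFun_append_ne_of_lt {u e : FinPath V} (hu : IsLoopAvoiding z A u)
    (he : IsEscapePath z E e) {k : ℕ} (hk : u.1 < k) (hkn : k ≤ u.1 + e.1) :
    (u.append e).toFun k ≠ z := by
  obtain ⟨j, rfl⟩ := Nat.exists_eq_add_of_lt hk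
  rw [add_assoc, toFun_append_right (hu.escape_start he) (by omega)]
  exact he.2.2 _ (by omega) (by omega)

theorem injective_append_loop_escapePath :
    Function.Injective fun x : {u : FinPath V // IsLoopAvoiding z A u} ×
      {e : FinPath V // IsEscapePath z E e} => x.1.1.append x.2.1 := by
  rintro ⟨⟨u, hu⟩, ⟨e, he⟩⟩ ⟨⟨u', hu'⟩, ⟨e', he'⟩⟩ (h : u.append e = u'.append e')
  have hsum : u.1 + e.1 = u'.1 + e'.1 := congrArg (·.1) h
  have hz : (u.append e).toFun u.1 = z := (toFun_append_left le_rfl).trans hu.2.1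
  have hz' : (u.append e).toFun u'.1 = z := h ▸ (toFun_append_left le_rfl).trans hu'.2.1
  -- both `u.1` and `u'.1` are the last visit to `z` of the concatenation
  have hlen : u.1 = u'.1 := le_antisymm
    (not_lt.1 fun hlt => (h ▸ toFun_append_ne_of_lt hu' he' hlt (by omega)) hz)
    (not_lt.1 fun hlt => toFun_append_ne_of_lt hu he hlt (by omega) hz')
  have hlen' : e.1 = e'.1 := by omega
  congr
  · refine ext_toFun hlen fun k hk => ?_
    rw [← toFun_append_left (δ := e) hk, h, toFun_append_left (hlen ▸ hk)]
  · refine ext_toFun hlen' fun j hj => ?_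
    rw [← toFun_append_right (hu.escape_start he) hj, h, hlen,
      toFun_append_right (hu'.escape_start he') (hlen' ▸ hj)]

section MarkovLaw

variable [MeasurableSpace V] {P : V → V → ℝ≥0∞} {μ : V → Measure (ℕ → V)}

noncomputable def escapeProb (μ : V → Measure (ℕ → V)) (z : V) (E : Set V) : ℝ≥0∞ :=
  μ z {ω | hitTimePos E ω < hitTimePos {z} ω}

theorem IsMarkovLaw.measure_cyl (hμ : IsMarkovLaw P μ) {z : V} {γ : FinPath V}
    (hγ : γ.toFun 0 = z) : μ z γ.cyl = γ.prob P :=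
  hγ ▸ hμ γ.1 γ.toFun

theorem IsMarkovLaw.measure_apply_zero_eq (hμ : IsMarkovLaw P μ) (v : V) :
    μ v {ω | ω 0 = v} = 1 := by
  have h := hμ 0 fun _ => v
  simpa [cylinder, pathProb] using h

theorem IsMarkovLaw.ae_apply_zero_eq [MeasurableSingletonClass V] (hμ : IsMarkovLaw P μ) (v : V)
    [IsProbabilityMeasure (μ v)] : ∀ᵐ ω ∂μ v, ω 0 = v := by
  have hmeas : MeasurableSet {ω : ℕ → V | ω 0 = v} :=
    measurableSet_singleton v |>.preimage (measurable_pi_apply 0)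
  exact ae_iff.2 <| (prob_compl_eq_zero_iff hmeas).2 (hμ.measure_apply_zero_eq v)

theorem IsMarkovLaw.measure_cyl_append (hμ : IsMarkovLaw P μ) {u e : FinPath V}
    (hu : IsLoopAvoiding z A u) (he : IsEscapePath z E e) :
    μ z (u.append e).cyl = u.prob P * e.prob P := by
  rw [hμ.measure_cyl ((toFun_append_left (Nat.zero_le _)).trans hu.1),
    prob_append P (hu.escape_start he)]

theorem preimage_update_swap_eq [DecidableEq V] {b c : V}
    (hbc : ∀ T : Set V, MeasurableSet T → (b ∈ T ↔ c ∈ T)) {S : Set (ℕ → V)}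
    (hS : MeasurableSet S) :
    (fun ω => Function.update ω 1 (Equiv.swap b c (ω 1))) ⁻¹' S = S := by
  set F := fun ω : ℕ → V => Function.update ω 1 (Equiv.swap b c (ω 1))
  have hswap : ∀ T : Set V, MeasurableSet T → ∀ y, Equiv.swap b c y ∈ T ↔ y ∈ T := by
    intro T hT y
    rcases eq_or_ne y b with rfl | hyb
    · simpa using (hbc T hT).symm
    rcases eq_or_ne y c with rfl | hyc
    · simpa using hbc T hT
    · rw [Equiv.swap_apply_of_ne_of_ne hyb hyc]
  have hF : Measurable[MeasurableSpace.invariants F] (id : (ℕ → V) → ℕ → V) := by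
    refine (@measurable_pi_iff _ _ _ (MeasurableSpace.invariants F) _ _).2 fun k => ?_
    refine MeasurableSpace.measurable_invariants_dom.2 ⟨measurable_pi_apply k, fun T hT => ?_⟩
    ext ω
    rcases eq_or_ne k 1 with rfl | hk
    · simpa [F] using hswap T hT (ω 1)
    · simp [F, hk]
  exact (hF hS).2

theorem IsMarkovLaw.eq_zero_of_forall_mem_imp [Fintype V] (hμ : IsMarkovLaw P μ) {b c v : V}
    (hrow : ∑ u, P v u = 1) (hbc : b ≠ c) (hsep : ∀ T : Set V, MeasurableSet T → b ∈ T → c ∈ T) :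
    P v c = 0 := by
  classical
  have hiff : ∀ T : Set V, MeasurableSet T → (b ∈ T ↔ c ∈ T) := fun T hT =>
    ⟨hsep T hT, fun hc => by_contra fun hb => hsep Tᶜ hT.compl hb hc⟩
  set p : V → ℕ → V := fun u k => if k = 0 then v else u
  have hmem : ∀ ω : ℕ → V, ω 0 = v → ω ∈ cylinder 1 (p (ω 1)) := fun ω h0 k hk => by
    interval_cases k <;> simp [p, h0]
  set S : V → Set (ℕ → V) := fun u => toMeasurable (μ v) (cylinder 1 (p u))
  have hcover : {ω | ω 0 = v} ⊆ ⋃ u ∈ Finset.univ.erase c, S u := by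
    intro ω h0
    rcases eq_or_ne (ω 1) c with h1 | h1
    · -- swapping `b` and `c` at time 1 preserves the measurable hull of the `b`-cylinder
      refine Set.mem_biUnion (Finset.mem_erase.2 ⟨hbc, Finset.mem_univ b⟩) ?_
      change ω ∈ toMeasurable (μ v) (cylinder 1 (p b))
      rw [← preimage_update_swap_eq hiff (measurableSet_toMeasurable (μ v) (cylinder 1 (p b)))]
      refine subset_toMeasurable _ _ ?_
      simpa [h1] using hmem (Function.update ω 1 (Equiv.swap b c (ω 1))) (by simpa using h0)
    · exact Set.mem_biUnion (Finset.mem_erase.2 ⟨h1, Finset.mem_univ _⟩)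
        (subset_toMeasurable _ _ (hmem ω h0))
  have hle : 1 ≤ ∑ u ∈ Finset.univ.erase c, P v u :=
    calc 1 = μ v {ω | ω 0 = v} := (hμ.measure_apply_zero_eq v).symm
      _ ≤ ∑ u ∈ Finset.univ.erase c, μ v (S u) :=
        (measure_mono hcover).trans (measure_biUnion_finset_le _ _)
      _ = ∑ u ∈ Finset.univ.erase c, P v u := Finset.sum_congr rfl fun u _ => by
        simpa [S, measure_toMeasurable, pathProb, p] using hμ 1 (p u)
  rw [← Finset.add_sum_erase _ _ (Finset.mem_univ c)] at hrow
  have : ∑ u ∈ Finset.univ.erase c, P v u = 1 := le_antisymm (hrow ▸ le_add_self) hle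
  simpa [this] using hrow

theorem IsMarkovLaw.measurableSet_singleton [Fintype V] (hμ : IsMarkovLaw P μ)
    (hrow : ∀ u, ∑ v, P u v = 1) (hin : ∀ c, ∃ v, P v c ≠ 0) (x : V) :
    MeasurableSet {x} := by
  have hsep : ∀ c ≠ x, ∃ T : Set V, MeasurableSet T ∧ x ∈ T ∧ c ∉ T := by
    intro c hc
    by_contra! h
    obtain ⟨v, hv⟩ := hin c
    exact hv (hμ.eq_zero_of_forall_mem_imp (hrow v) hc.symm h)
  choose T hT hxT hcT using hsep
  convert MeasurableSet.iInter fun c => MeasurableSet.iInter fun hc => hT c hc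
  ext y
  simp only [Set.mem_singleton_iff, Set.mem_iInter]
  exact ⟨fun hy c hc => hy ▸ hxT c hc, fun h => by_contra fun hy => hcT y hy (h y hy)⟩

section Renewal

variable [Countable V] [MeasurableSingletonClass V] [IsProbabilityMeasure (μ z)]

theorem IsMarkovLaw.escapeProb_eq_tsum (hμ : IsMarkovLaw P μ) (hzE : z ∉ E) :
    escapeProb μ z E = ∑' γ : {γ : FinPath V // IsEscapePath z E γ}, γ.1.prob P := by
  have hae : {ω | hitTimePos E ω < hitTimePos {z} ω} =ᵐ[μ z]
      ⋃ γ : {γ : FinPath V // IsEscapePath z E γ}, γ.1.cyl := by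
    refine Filter.eventuallyEq_set.2 ((hμ.ae_apply_zero_eq z).mono fun ω h0 => ?_)
    refine ⟨mem_iUnion_cyl_of_hitTimePos_lt h0, fun hω => ?_⟩
    obtain ⟨γ, hγ⟩ := Set.mem_iUnion.1 hω
    exact hitTimePos_lt_of_mem_cyl hzE γ.2 hγ
  rw [escapeProb, measure_congr hae, measure_iUnion
    (pairwise_disjoint_cyl Subtype.val_injective fun γ => γ.2.2.1)
    fun _ => measurableSet_cylinder _ _]
  exact tsum_congr fun γ => hμ.measure_cyl γ.2.1

theorem IsMarkovLaw.measure_hitTime_lt_le (hμ : IsMarkovLaw P μ) (hzB : z ∉ B) :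
    μ z {ω | hitTime B ω < hitTime A ω} ≤
      (∑' u : {u : FinPath V // IsLoopAvoiding z A u}, u.1.prob P) * escapeProb μ z B := by
  calc μ z {ω | hitTime B ω < hitTime A ω}
      ≤ μ z (⋃ x : {u : FinPath V // IsLoopAvoiding z A u} ×
          {e : FinPath V // IsEscapePath z B e}, (x.1.1.append x.2.1).cyl) :=
        measure_mono_ae <| (hμ.ae_apply_zero_eq z).mono fun ω h0 h =>
          mem_iUnion_cyl_append_of_hitTime_lt h0 h
    _ ≤ ∑' x : {u : FinPath V // IsLoopAvoiding z A u} × {e : FinPath V // IsEscapePath z B e},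
          μ z (x.1.1.append x.2.1).cyl := measure_iUnion_le _
    _ = _ := by
      rw [hμ.escapeProb_eq_tsum hzB, ENNReal.tsum_mul_tsum]
      exact tsum_congr fun x => hμ.measure_cyl_append x.1.2 x.2.2

theorem IsMarkovLaw.tsum_loop_mul_escapeProb_le_one (hμ : IsMarkovLaw P μ) (hzA : z ∉ A) :
    (∑' u : {u : FinPath V // IsLoopAvoiding z A u}, u.1.prob P) * escapeProb μ z A ≤ 1 := by
  rw [hμ.escapeProb_eq_tsum hzA, ENNReal.tsum_mul_tsum]
  calc ∑' x : {u : FinPath V // IsLoopAvoiding z A u} × {e : FinPath V // IsEscapePath z A e},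
        x.1.1.prob P * x.2.1.prob P
      = ∑' x : {u : FinPath V // IsLoopAvoiding z A u} × {e : FinPath V // IsEscapePath z A e},
          μ z (x.1.1.append x.2.1).cyl :=
        (tsum_congr fun x => hμ.measure_cyl_append x.1.2 x.2.2).symm
    _ = μ z (⋃ x : {u : FinPath V // IsLoopAvoiding z A u} ×
          {e : FinPath V // IsEscapePath z A e}, (x.1.1.append x.2.1).cyl) :=
        (measure_iUnion (pairwise_disjoint_cyl injective_append_loop_escapePath
          fun x => isFirstEntrance_append x.1.2 x.2.2) fun _ => measurableSet_cylinder _ _).symm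
    _ ≤ 1 := prob_le_one

theorem IsMarkovLaw.measure_hitTime_lt_mul_escapeProb_le (hμ : IsMarkovLaw P μ) (hzA : z ∉ A)
    (hzB : z ∉ B) :
    μ z {ω | hitTime B ω < hitTime A ω} * escapeProb μ z A ≤ escapeProb μ z B := by
  set L := ∑' u : {u : FinPath V // IsLoopAvoiding z A u}, u.1.prob P
  calc μ z {ω | hitTime B ω < hitTime A ω} * escapeProb μ z A
      ≤ L * escapeProb μ z B * escapeProb μ z A := by
        gcongr
        exact hμ.measure_hitTime_lt_le hzB
    _ = L * escapeProb μ z A * escapeProb μ z B := mul_right_comm _ _ _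
    _ ≤ escapeProb μ z B := by
        simpa using mul_le_mul_left (hμ.tsum_loop_mul_escapeProb_le_one hzA) (escapeProb μ z B)

end Renewal

theorem IsMarkovLaw.escapeProb_pos (hμ : IsMarkovLaw P μ) (hzE : z ∉ E) {a : V} (ha : a ∈ E)
    (hreach : Relation.ReflTransGen (fun u v => P u v ≠ 0) z a) : 0 < escapeProb μ z E := by
  obtain ⟨n, q, hq0, hqn, hq⟩ := hreach.exists_seq
  obtain ⟨m, hmn, hm⟩ := exists_isFirstEntrance_le (hqn ▸ ha : q n ∈ E)
  obtain ⟨t, htm, -, hγ⟩ := exists_isEscapePath_shift hq0 hm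
  have hprob : (ofFun (m - t) fun j => q (t + j)).prob P ≠ 0 := by
    refine (Finset.prod_ne_zero_iff (s := Finset.range (m - t))).2 fun j hj => ?_
    rw [Finset.mem_range] at hj
    rw [toFun_ofFun hj.le, toFun_ofFun hj]
    exact hq _ (by omega)
  calc 0 < _ := pos_iff_ne_zero.2 hprob
    _ = μ z (ofFun (m - t) fun j => q (t + j)).cyl := (hμ.measure_cyl hγ.1).symm
    _ ≤ escapeProb μ z E := measure_mono fun ω hω => hitTimePos_lt_of_mem_cyl hzE hγ hω

end MarkovLaw

section Network

variable {w : V → V → ℝ} {pi : V → ℝ}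

noncomputable def transProb (w : V → V → ℝ) (pi : V → ℝ) (u v : V) : ℝ≥0∞ :=
  ENNReal.ofReal (w u v / pi u)

theorem pi_pos_of_connected [Fintype V] [Nontrivial V] (hnonneg : ∀ u v, 0 ≤ w u v)
    (hconn : ∀ u v : V, Relation.ReflTransGen (fun a b => 0 < w a b) u v)
    (hpi : ∀ v, pi v = ∑ u, w v u) (v : V) : 0 < pi v := by
  obtain ⟨u, hu⟩ := exists_ne v
  rcases (hconn v u).cases_head with rfl | ⟨c, hc, -⟩
  · exact absurd rfl hu
  · rw [hpi]
    exact Finset.sum_pos' (fun i _ => hnonneg v i) ⟨c, Finset.mem_univ c, hc⟩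

theorem exists_pos_weight_to [Nontrivial V]
    (hconn : ∀ u v : V, Relation.ReflTransGen (fun a b => 0 < w a b) u v) (c : V) :
    ∃ v, 0 < w v c := by
  obtain ⟨u, hu⟩ := exists_ne c
  rcases (hconn u c).cases_tail with rfl | ⟨v, -, hv⟩
  · exact absurd rfl hu
  · exact ⟨v, hv⟩

theorem transProb_ne_zero (hpos : ∀ v, 0 < pi v) {u v : V} (h : 0 < w u v) :
    transProb w pi u v ≠ 0 := by
  simpa [transProb] using div_pos h (hpos u)

theorem sum_transProb [Fintype V] (hnonneg : ∀ u v, 0 ≤ w u v) (hpi : ∀ v, pi v = ∑ u, w v u)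
    (hpos : ∀ v, 0 < pi v) (u : V) : ∑ v, transProb w pi u v = 1 := by
  simp only [transProb]
  rw [← ENNReal.ofReal_sum_of_nonneg fun v _ => div_nonneg (hnonneg u v) (hpos u).le,
    ← Finset.sum_div, ← hpi, div_self (hpos u).ne', ENNReal.ofReal_one]

theorem isMarkovLaw_transProb [MeasurableSpace V] {μ : V → Measure (ℕ → V)}
    (hnonneg : ∀ u v, 0 ≤ w u v) (hpos : ∀ v, 0 ≤ pi v)
    (hchain : ∀ (v : V) (n : ℕ) (path : Fin (n + 1) → V), path 0 = v →
      μ v {ω | ∀ i : Fin (n + 1), ω i.val = path i} =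
        ENNReal.ofReal (∏ i : Fin n, w (path i.castSucc) (path i.succ) / pi (path i.castSucc))) :
    IsMarkovLaw (transProb w pi) μ := by
  intro n p
  have hcyl : cylinder n p = {ω | ∀ i : Fin (n + 1), ω i.val = p i} :=
    Set.ext fun ω => ⟨fun h i => h i (Nat.lt_succ_iff.1 i.2), fun h k hk => h ⟨k, by omega⟩⟩
  rw [hcyl, hchain (p 0) n (fun i => p i) rfl, ENNReal.ofReal_prod_of_nonneg fun i _ =>
    div_nonneg (hnonneg _ _) (hpos _), pathProb, ← Fin.prod_univ_eq_prod_range]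
  rfl

end Network

end RandomWalk

open RandomWalk in
theorem stmt0_general {V : Type*} [Fintype V] [MeasurableSpace V]
    (w : V → V → ℝ) (hnonneg : ∀ u v, 0 ≤ w u v)
    (hconn : ∀ u v : V, Relation.ReflTransGen (fun a b => 0 < w a b) u v)
    (pi : V → ℝ) (hpi : ∀ v, pi v = ∑ u, w v u)
    (μ : V → Measure (ℕ → V)) (hprob : ∀ v, IsProbabilityMeasure (μ v))
    (hchain : ∀ (v : V) (n : ℕ) (path : Fin (n + 1) → V), path 0 = v →
      μ v {ω | ∀ i : Fin (n + 1), ω i.val = path i} =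
        ENNReal.ofReal (∏ i : Fin n, w (path i.castSucc) (path i.succ) / pi (path i.castSucc)))
    (A B : Set V) (hA : A.Nonempty)
    (z : V) (hz : z ∉ A ∪ B)
    (C : V → Set V → ℝ)
    (hC : ∀ (v : V) (D : Set V),
      C v D = pi v * (μ v {ω | hitTimePos D ω < hitTimePos {v} ω}).toReal) :
    (μ z {ω | hitTime B ω < hitTime A ω}).toReal ≤ C z B / C z A := by
  obtain ⟨a, ha⟩ := hA
  have hzA : z ∉ A := fun h => hz (Or.inl h)
  have hzB : z ∉ B := fun h => hz (Or.inr h)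
  have : Nontrivial V := nontrivial_of_ne z a fun h => hzA (h ▸ ha)
  have hpos := pi_pos_of_connected hnonneg hconn hpi
  have hμ := isMarkovLaw_transProb hnonneg (fun v => (hpos v).le) hchain
  have : MeasurableSingletonClass V := ⟨hμ.measurableSet_singleton (sum_transProb hnonneg hpi hpos)
    fun c => (exists_pos_weight_to hconn c).imp fun _ => transProb_ne_zero hpos⟩
  have := hprob z
  have hesc : 0 < escapeProb μ z A :=
    hμ.escapeProb_pos hzA ha (.mono (fun _ _ => transProb_ne_zero hpos) _ _ (hconn z a))
  rw [hC, hC, mul_div_mul_left _ _ (hpos z).ne']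
  change _ ≤ (escapeProb μ z B).toReal / (escapeProb μ z A).toReal
  rw [le_div_iff₀ (ENNReal.toReal_pos hesc.ne' (measure_ne_top _ _)), ← ENNReal.toReal_mul]
  exact ENNReal.toReal_mono (measure_ne_top _ _) (hμ.measure_hitTime_lt_mul_escapeProb_le hzA hzB)

/-- For the weighted random walk on a finite connected network started at `z ∉ A ∪ B`,
`P(τ_B < τ_A) ≤ C(z,B)/C(z,A)`, where the effective conductance `C(z,D)` is `π(z)` times
the probability to hit `D` before returning to `z`. -/
theorem stmt0 {V : Type*} [Fintype V] [MeasurableSpace V]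
    (w : V → V → ℝ) (hsymm : ∀ u v, w u v = w v u) (hnonneg : ∀ u v, 0 ≤ w u v)
    (hconn : ∀ u v : V, Relation.ReflTransGen (fun a b => 0 < w a b) u v)
    (pi : V → ℝ) (hpi : ∀ v, pi v = ∑ u, w v u)
    (μ : V → Measure (ℕ → V)) (hprob : ∀ v, IsProbabilityMeasure (μ v))
    (hchain : ∀ (v : V) (n : ℕ) (path : Fin (n + 1) → V), path 0 = v →
      μ v {ω | ∀ i : Fin (n + 1), ω i.val = path i} =
        ENNReal.ofReal (∏ i : Fin n, w (path i.castSucc) (path i.succ) / pi (path i.castSucc)))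
    (A B : Set V) (hA : A.Nonempty) (hB : B.Nonempty) (hAB : Disjoint A B)
    (z : V) (hz : z ∉ A ∪ B)
    (C : V → Set V → ℝ)
    (hC : ∀ (v : V) (D : Set V),
      C v D = pi v * (μ v {ω | hitTimePos D ω < hitTimePos {v} ω}).toReal) :
    (μ z {ω | hitTime B ω < hitTime A ω}).toReal ≤ C z B / C z A :=
  stmt0_general w hnonneg hconn pi hpi μ hprob hchain A B hA z hz C hC
end

section
/- For a recurrent irreducible Markov chain on a finite state space with invariant measure π, the expected return time to a state z (started at z) equals π(S)/π(z), where π(S) is the total mass of π. -/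
/-!
`avoidProb P z n v`, the probability that the chain started at `v` avoids `z` at times
`1, …, n`, is the `n`-th iterate on `1` of the transition operator killed at `z`. Invariance of
`π` telescopes: `π z * ∑_{n < N} avoidProb P z n z = π(S) - ∑ v, π v * avoidProb P z N v`. The
decreasing limit of `avoidProb P z N` is a nonnegative harmonic function of the killed operator,
which vanishes by the maximum principle since `z` is accessible; so the right side tends to
`π(S)`. The σ-algebra on the states is arbitrary, so identifying the return-time tails with
`avoidProb P z n z` needs singletons to be measurable first; the cylinder law and `π > 0` force it.
-/

open MeasureTheory

open Finset Filter Topology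

lemma natCast_lt_hitTimePos_iff {V : Type*} (D : Set V) (ω : ℕ → V) (n : ℕ) :
    (n : ℕ∞) < hitTimePos D ω ↔ ∀ i : Fin n, ω (i + 1) ∉ D := by
  rw [← ENat.add_one_le_iff (ENat.natCast_ne_top n), hitTimePos, le_sInf_iff]
  constructor
  · intro h i hi
    have := h _ ⟨i + 1, rfl, by omega, hi⟩
    norm_cast at this
    omega
  · rintro h _ ⟨k, rfl, hk, hkD⟩
    by_contra hlt
    have hkn : k ≤ n := by
      by_contra h'
      exact hlt (by exact_mod_cast (by omega : n + 1 ≤ k))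
    exact h ⟨k - 1, by omega⟩ (by simpa [Nat.sub_add_cancel hk] using hkD)

section AvoidProb

variable {V : Type*} [Fintype V] [DecidableEq V] {P : V → V → ℝ} {z : V}

variable (P z) in
def killedStep (f : V → ℝ) (v : V) : ℝ := ∑ w, P v w * if w = z then 0 else f w

variable (P z) in
def avoidProb (n : ℕ) : V → ℝ := (killedStep P z)^[n] 1

lemma avoidProb_zero : avoidProb P z 0 = 1 := rfl

lemma avoidProb_succ (n : ℕ) : avoidProb P z (n + 1) = killedStep P z (avoidProb P z n) :=
  Function.iterate_succ_apply' _ _ _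

lemma killedStep_mono (hnonneg : ∀ u v, 0 ≤ P u v) : Monotone (killedStep P z) :=
  fun f g hfg v => sum_le_sum fun w _ => by
    gcongr
    · exact hnonneg v w
    · split_ifs
      exacts [le_rfl, hfg w]

lemma killedStep_nonneg (hnonneg : ∀ u v, 0 ≤ P u v) {f : V → ℝ} (hf : 0 ≤ f) :
    0 ≤ killedStep P z f :=
  fun v => sum_nonneg fun w _ => mul_nonneg (hnonneg v w) (by split_ifs; exacts [le_rfl, hf w])

lemma killedStep_one_le (hnonneg : ∀ u v, 0 ≤ P u v) (hrow : ∀ u, ∑ v, P u v = 1) :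
    killedStep P z 1 ≤ 1 := fun v => by
  calc killedStep P z 1 v ≤ ∑ w, P v w :=
        sum_le_sum fun w _ => mul_le_of_le_one_right (hnonneg v w) (by split_ifs <;> simp)
    _ = 1 := hrow v

lemma continuous_killedStep : Continuous (killedStep P z) :=
  continuous_pi fun _ => continuous_finsetSum _ fun w _ =>
    continuous_const.mul (by split_ifs; exacts [continuous_const, continuous_apply w])

lemma avoidProb_nonneg (hnonneg : ∀ u v, 0 ≤ P u v) (n : ℕ) : 0 ≤ avoidProb P z n := by
  induction n with
  | zero => exact zero_le_one
  | succ n ih => exact (avoidProb_succ (P := P) n) ▸ killedStep_nonneg hnonneg ih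

lemma avoidProb_antitone (hnonneg : ∀ u v, 0 ≤ P u v) (hrow : ∀ u, ∑ v, P u v = 1) :
    Antitone (avoidProb P z) :=
  antitone_nat_of_succ_le fun n => by
    rw [avoidProb, Function.iterate_succ_apply]
    exact (killedStep_mono hnonneg).iterate n (killedStep_one_le hnonneg hrow)

/-- Maximum principle: a nonnegative function that is harmonic for the chain killed at `z`
is constant on the communicating class of a maximiser, hence vanishes, as `z` can be entered. -/
lemma eq_zero_of_killedStep_eq (hnonneg : ∀ u v, 0 ≤ P u v) (hrow : ∀ u, ∑ v, P u v = 1)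
    (hirr : ∀ u v, Relation.ReflTransGen (fun a b => 0 < P a b) u v) {x₀ : V}
    (hx₀ : 0 < P x₀ z) {g : V → ℝ} (hg0 : 0 ≤ g) (hg : killedStep P z g = g) : g = 0 := by
  have : Nonempty V := ⟨z⟩
  obtain ⟨v₀, hv₀⟩ := Finite.exists_max g
  suffices hm : g v₀ ≤ 0 from funext fun x => le_antisymm ((hv₀ x).trans hm) (hg0 x)
  by_contra! hm
  have propagate : ∀ x w, g x = g v₀ → 0 < P x w → w ≠ z ∧ g w = g v₀ := by
    intro x w hx hxw
    set h : V → ℝ := fun w => if w = z then 0 else g w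
    have hle : ∀ w, h w ≤ g v₀ := fun w => by
      simp only [h]; split_ifs
      exacts [hm.le, hv₀ w]
    have hsum : ∑ w, P x w * (g v₀ - h w) = 0 := by
      simp only [mul_sub, sum_sub_distrib, ← sum_mul, hrow, one_mul]
      rw [← hx, ← congrFun hg x, killedStep, sub_self]
    have hw := (sum_eq_zero_iff_of_nonneg fun w _ =>
      mul_nonneg (hnonneg x w) (sub_nonneg.2 (hle w))).1 hsum w (mem_univ w)
    have hhw : h w = g v₀ := by
      rcases mul_eq_zero.1 hw with h0 | h0
      · exact absurd h0 hxw.ne'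
      · linarith
    by_cases hwz : w = z
    · simp only [h, if_pos hwz] at hhw
      exact absurd hhw.symm hm.ne'
    · simpa [h, hwz] using hhw
  have reach : ∀ x, Relation.ReflTransGen (fun a b => 0 < P a b) v₀ x → g x = g v₀ :=
    fun x hx => by
      induction hx with
      | refl => rfl
      | tail _ hbc ih => exact (propagate _ _ ih hbc).2
  exact (propagate x₀ z (reach x₀ (hirr v₀ x₀)) hx₀).1 rfl

lemma tendsto_avoidProb (hnonneg : ∀ u v, 0 ≤ P u v) (hrow : ∀ u, ∑ v, P u v = 1)
    (hirr : ∀ u v, Relation.ReflTransGen (fun a b => 0 < P a b) u v) {x₀ : V}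
    (hx₀ : 0 < P x₀ z) : Tendsto (avoidProb P z) atTop (𝓝 0) := by
  have hlim := tendsto_atTop_ciInf (avoidProb_antitone (z := z) hnonneg hrow)
    ⟨0, by rintro _ ⟨n, rfl⟩; exact avoidProb_nonneg hnonneg n⟩
  set g := ⨅ n, avoidProb P z n
  have hfixed : killedStep P z g = g := by
    refine tendsto_nhds_unique ((continuous_killedStep.tendsto g).comp hlim) ?_
    simpa [Function.comp_def, avoidProb_succ] using hlim.comp (tendsto_add_atTop_nat 1)
  have hg0 : 0 ≤ g := le_ciInf fun n => avoidProb_nonneg hnonneg n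
  rwa [← eq_zero_of_killedStep_eq hnonneg hrow hirr hx₀ hg0 hfixed]

lemma sum_mul_killedStep {pi : V → ℝ} (hinv : ∀ v, ∑ u, pi u * P u v = pi v) (f : V → ℝ) :
    ∑ v, pi v * killedStep P z f v = ∑ v, pi v * f v - pi z * f z := by
  calc ∑ v, pi v * killedStep P z f v
      = ∑ w, (∑ v, pi v * P v w) * if w = z then 0 else f w := by
        simp only [killedStep, mul_sum, sum_mul, mul_assoc]
        exact sum_comm
    _ = ∑ v, pi v * f v - pi z * f z := by
        rw [← sum_erase_eq_sub (mem_univ z)]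
        simp only [hinv, mul_ite, mul_zero, sum_ite, sum_const_zero, zero_add]
        rw [filter_ne']

lemma mul_sum_range_avoidProb {pi : V → ℝ} (hinv : ∀ v, ∑ u, pi u * P u v = pi v) (N : ℕ) :
    pi z * ∑ n ∈ range N, avoidProb P z n z = ∑ v, pi v - ∑ v, pi v * avoidProb P z N v := by
  induction N with
  | zero => simp [avoidProb_zero]
  | succ N ih => rw [sum_range_succ, mul_add, ih, avoidProb_succ, sum_mul_killedStep hinv]; ring

lemma hasSum_avoidProb (hnonneg : ∀ u v, 0 ≤ P u v) (hrow : ∀ u, ∑ v, P u v = 1)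
    (hirr : ∀ u v, Relation.ReflTransGen (fun a b => 0 < P a b) u v) {x₀ : V}
    (hx₀ : 0 < P x₀ z) {pi : V → ℝ} (hinv : ∀ v, ∑ u, pi u * P u v = pi v) (hz : pi z ≠ 0) :
    HasSum (fun n => avoidProb P z n z) ((∑ v, pi v) / pi z) := by
  refine (hasSum_iff_tendsto_nat_of_nonneg (fun n => avoidProb_nonneg hnonneg n z) _).2 ?_
  have hmass : Tendsto (fun N => ∑ v, pi v * avoidProb P z N v) atTop (𝓝 0) := by
    simpa using tendsto_finsetSum univ fun v _ =>
      ((tendsto_pi_nhds.1 (tendsto_avoidProb hnonneg hrow hirr hx₀)) v).const_mul (pi v)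
  have hpartial : ∀ N, ∑ n ∈ range N, avoidProb P z n z
      = ((∑ v, pi v) - ∑ v, pi v * avoidProb P z N v) / pi z := fun N => by
    rw [← mul_sum_range_avoidProb hinv, mul_div_cancel_left₀ _ hz]
  simpa [hpartial] using (hmass.const_sub (∑ v, pi v)).div_const (pi z)

end AvoidProb

section PathWeight

variable {V : Type*}

def pathWeight (P : V → V → ℝ) {n : ℕ} (path : Fin (n + 1) → V) : ℝ :=
  ∏ i : Fin n, P (path i.castSucc) (path i.succ)

lemma pathWeight_cons (P : V → V → ℝ) {n : ℕ} (u : V) (q : Fin (n + 1) → V) :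
    pathWeight P (Fin.cons u q : Fin (n + 2) → V) = P u (q 0) * pathWeight P q := by
  simp [pathWeight, Fin.prod_univ_succ]

lemma pathWeight_nonneg {P : V → V → ℝ} (hnonneg : ∀ u v, 0 ≤ P u v) {n : ℕ}
    (path : Fin (n + 1) → V) : 0 ≤ pathWeight P path :=
  prod_nonneg fun _ _ => hnonneg _ _

lemma sum_pathWeight_avoid [Fintype V] [DecidableEq V] (P : V → V → ℝ) (z : V) :
    ∀ (n : ℕ) (u : V), ∑ p : Fin n → V with ∀ i, p i ≠ z, pathWeight P (Fin.cons u p)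
      = avoidProb P z n u
  | 0, u => by simp [pathWeight, avoidProb_zero]
  | n + 1, u => by
    rw [sum_filter, ← (Fin.consEquiv fun _ => V).sum_comp, Fintype.sum_prod_type, avoidProb_succ,
      killedStep]
    refine sum_congr rfl fun v _ => ?_
    change ∑ q : Fin n → V, (if ∀ i, (Fin.cons v q : Fin (n + 1) → V) i ≠ z then
      pathWeight P (Fin.cons u (Fin.cons v q) : Fin (n + 2) → V) else 0) = _
    simp only [Fin.forall_fin_succ, Fin.cons_zero, Fin.cons_succ, pathWeight_cons]
    split_ifs with hv
    · simp [hv]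
    · simp [hv, ← sum_pathWeight_avoid P z n v, sum_filter, mul_sum]

end PathWeight

lemma measure_le_of_mem_measurableAtom {ι W : Type*} [DecidableEq ι] [MeasurableSpace W]
    (ν : Measure (ι → W)) (X : Set (ι → W)) (k : ι) (x : W) :
    ν {ω | ω k ∈ measurableAtom x ∧ Function.update ω k x ∈ X} ≤ ν X := by
  calc ν {ω | ω k ∈ measurableAtom x ∧ Function.update ω k x ∈ X}
      ≤ ν (toMeasurable ν X) := measure_mono fun ω ⟨hk, hX⟩ => by
        simpa using mem_of_mem_measurableAtom hk
          (measurable_update ω (measurableSet_toMeasurable ν X)) (subset_toMeasurable ν X hX)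
    _ = ν X := measure_toMeasurable X

section MarkovChainLaw

variable {V : Type*} [MeasurableSpace V] {P : V → V → ℝ} {μ : V → Measure (ℕ → V)}

variable (P μ) in
def IsMarkovChainLaw : Prop :=
  ∀ (v : V) (n : ℕ) (path : Fin (n + 1) → V), path 0 = v →
    μ v {ω | ∀ i : Fin (n + 1), ω i.val = path i} = ENNReal.ofReal (pathWeight P path)

namespace IsMarkovChainLaw

lemma measure_start (hμ : IsMarkovChainLaw P μ) (v : V) : μ v {ω | ω 0 = v} = 1 := by
  simpa [pathWeight] using hμ v 0 (fun _ => v) rfl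

lemma measure_step (hμ : IsMarkovChainLaw P μ) (v r : V) :
    μ v {ω | ω 0 = v ∧ ω 1 = r} = ENNReal.ofReal (P v r) := by
  simpa [pathWeight, Fin.forall_fin_two] using hμ v 1 ![v, r] rfl

/-- The cylinder law cannot tell a step into the measurable atom of `z` from a step to `z`
itself, so no other state of the atom is ever entered. -/
lemma measurableAtom_eq_singleton [Fintype V] (hμ : IsMarkovChainLaw P μ)
    (hnonneg : ∀ u v, 0 ≤ P u v) (hrow : ∀ u, ∑ v, P u v = 1) (hent : ∀ a, ∃ v, 0 < P v a)
    (z : V) : measurableAtom z = {z} := by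
  classical
  refine Set.Subset.antisymm (fun a ha => ?_) (by simp)
  by_contra haz
  obtain ⟨v, hv⟩ := hent a
  set C := measurableAtom z
  have hS : MeasurableSet {ω : ℕ → V | ω 1 ∈ C} :=
    measurable_pi_apply 1 (MeasurableSet.measurableAtom_of_countable z)
  have hin : μ v ({ω | ω 0 = v} ∩ {ω | ω 1 ∈ C}) ≤ ENNReal.ofReal (P v z) := by
    rw [← hμ.measure_step]
    refine le_trans (measure_mono ?_) (measure_le_of_mem_measurableAtom _ _ 1 z)
    rintro ω ⟨h0, h1⟩
    exact ⟨h1, by simpa using h0⟩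
  have hout : μ v ({ω | ω 0 = v} \ {ω | ω 1 ∈ C})
      ≤ ENNReal.ofReal (∑ r with r ∉ C, P v r) := by
    rw [ENNReal.ofReal_sum_of_nonneg fun r _ => hnonneg v r]
    calc μ v ({ω | ω 0 = v} \ {ω | ω 1 ∈ C})
        ≤ μ v (⋃ r ∈ univ.filter (· ∉ C), {ω | ω 0 = v ∧ ω 1 = r}) :=
          measure_mono fun ω ⟨h0, h1⟩ => by simpa using ⟨h0, h1⟩
      _ ≤ _ := measure_biUnion_finset_le _ _
      _ = _ := by simp only [hμ.measure_step]
  have hsplit : 1 ≤ P v z + ∑ r with r ∉ C, P v r := by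
    rw [← ENNReal.one_le_ofReal, ENNReal.ofReal_add (hnonneg v z)
      (sum_nonneg fun r _ => hnonneg v r), ← hμ.measure_start v, ← measure_inter_add_sdiff _ hS]
    exact add_le_add hin hout
  have hpair : P v z + P v a ≤ ∑ r with r ∈ C, P v r := by
    rw [← sum_pair (Ne.symm haz)]
    refine sum_le_sum_of_subset_of_nonneg ?_ fun r _ _ => hnonneg v r
    intro r hr
    rw [mem_insert, mem_singleton] at hr
    rcases hr with rfl | rfl
    exacts [mem_filter.2 ⟨mem_univ _, mem_measurableAtom_self _⟩, mem_filter.2 ⟨mem_univ _, ha⟩]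
  linarith [sum_filter_add_sum_filter_not univ (· ∈ C) (P v), hrow v]

lemma measurableSingletonClass [Fintype V] (hμ : IsMarkovChainLaw P μ)
    (hnonneg : ∀ u v, 0 ≤ P u v) (hrow : ∀ u, ∑ v, P u v = 1) (hent : ∀ a, ∃ v, 0 < P v a) :
    MeasurableSingletonClass V :=
  ⟨fun z => hμ.measurableAtom_eq_singleton hnonneg hrow hent z ▸
    MeasurableSet.measurableAtom_of_countable z⟩

lemma ae_start [MeasurableSingletonClass V] (hμ : IsMarkovChainLaw P μ) (v : V)
    [IsProbabilityMeasure (μ v)] : ∀ᵐ ω ∂μ v, ω 0 = v := by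
  have hS : MeasurableSet {ω : ℕ → V | ω 0 = v} :=
    measurableSet_singleton v |>.preimage (measurable_pi_apply 0)
  exact ae_iff.2 <| (prob_compl_eq_zero_iff hS).2 (hμ.measure_start v)

lemma measure_tail_mem [MeasurableSingletonClass V] (hμ : IsMarkovChainLaw P μ) (v : V)
    [IsProbabilityMeasure (μ v)] {n : ℕ} (s : Finset (Fin n → V)) :
    μ v {ω | (fun i : Fin n => ω (i + 1)) ∈ s}
      = ∑ p ∈ s, ENNReal.ofReal (pathWeight P (Fin.cons v p)) := by
  have htail : Measurable fun (ω : ℕ → V) (i : Fin n) => ω (i + 1) := by fun_prop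
  change μ v ((fun (ω : ℕ → V) (i : Fin n) => ω (i + 1)) ⁻¹' s) = _
  rw [← sum_measure_preimage_singleton s fun p _ => htail (measurableSet_singleton p)]
  refine sum_congr rfl fun p _ => ?_
  rw [← hμ v n (Fin.cons v p) rfl]
  refine measure_congr ?_
  filter_upwards [hμ.ae_start v] with ω hω
  change ((fun i : Fin n => ω (i + 1)) = p)
    = ∀ i : Fin (n + 1), ω i = (Fin.cons v p : Fin (n + 1) → V) i
  simp [funext_iff, Fin.forall_fin_succ, hω]

lemma measure_natCast_lt_hitTimePos [Fintype V] [DecidableEq V] [MeasurableSingletonClass V]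
    (hμ : IsMarkovChainLaw P μ) (hnonneg : ∀ u v, 0 ≤ P u v) (z : V)
    [IsProbabilityMeasure (μ z)] (n : ℕ) :
    μ z {ω | (n : ℕ∞) < hitTimePos {z} ω} = ENNReal.ofReal (avoidProb P z n z) := by
  have hset : {ω : ℕ → V | (n : ℕ∞) < hitTimePos {z} ω}
      = {ω | (fun i : Fin n => ω (i + 1)) ∈ univ.filter fun p => ∀ i, p i ≠ z} := by
    ext ω
    simp [natCast_lt_hitTimePos_iff]
  rw [hset, hμ.measure_tail_mem, ← ENNReal.ofReal_sum_of_nonneg fun p _ =>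
    pathWeight_nonneg hnonneg _, sum_pathWeight_avoid]

end IsMarkovChainLaw

end MarkovChainLaw

lemma exists_pos_of_invariant {V : Type*} [Fintype V] {P : V → V → ℝ} {pi : V → ℝ}
    (hnonneg : ∀ u v, 0 ≤ P u v) (hinv : ∀ v, ∑ u, pi u * P u v = pi v) {a : V}
    (ha : pi a ≠ 0) : ∃ v, 0 < P v a := by
  by_contra! h
  exact ha <| (hinv a).symm.trans <| sum_eq_zero fun u _ => by
    rw [le_antisymm (h u) (hnonneg u a), mul_zero]

theorem stmt2_general {V : Type*} [Fintype V] [MeasurableSpace V]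
    (P : V → V → ℝ) (hnonneg : ∀ u v, 0 ≤ P u v) (hrow : ∀ u, ∑ v, P u v = 1)
    (hirr : ∀ u v, Relation.ReflTransGen (fun a b => 0 < P a b) u v)
    (pi : V → ℝ) (hpos : ∀ v, 0 < pi v) (hinv : ∀ v, ∑ u, pi u * P u v = pi v)
    (μ : V → Measure (ℕ → V)) (hprob : ∀ v, IsProbabilityMeasure (μ v))
    (hchain : ∀ (v : V) (n : ℕ) (path : Fin (n + 1) → V), path 0 = v →
      μ v {ω | ∀ i : Fin (n + 1), ω i.val = path i} =
        ENNReal.ofReal (∏ i : Fin n, P (path i.castSucc) (path i.succ)))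
    (z : V) :
    ∑' n : ℕ, μ z {ω | (n : ℕ∞) < hitTimePos {z} ω} =
      ENNReal.ofReal ((∑ v, pi v) / pi z) := by
  classical
  have hμ : IsMarkovChainLaw P μ := hchain
  have hent : ∀ a, ∃ v, 0 < P v a := fun a => exists_pos_of_invariant hnonneg hinv (hpos a).ne'
  have := hμ.measurableSingletonClass hnonneg hrow hent
  obtain ⟨x₀, hx₀⟩ := hent z
  have hsum := hasSum_avoidProb hnonneg hrow hirr hx₀ hinv (hpos z).ne'
  calc ∑' n : ℕ, μ z {ω | (n : ℕ∞) < hitTimePos {z} ω}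
      = ∑' n, ENNReal.ofReal (avoidProb P z n z) :=
        tsum_congr (hμ.measure_natCast_lt_hitTimePos hnonneg z)
    _ = ENNReal.ofReal ((∑ v, pi v) / pi z) := by
        rw [← ENNReal.ofReal_tsum_of_nonneg (fun n => avoidProb_nonneg hnonneg n z) hsum.summable,
          hsum.tsum_eq]

/-- For a recurrent irreducible Markov chain on a finite state space with invariant measure `π`,
the expected return time to `z`, started at `z`, equals `π(S)/π(z)`.  (The expectation of the
`ℕ∞`-valued return time is expressed as the sum of its tail probabilities.) -/
theorem stmt2 {V : Type*} [Fintype V] [Nonempty V] [MeasurableSpace V]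
    (P : V → V → ℝ) (hnonneg : ∀ u v, 0 ≤ P u v) (hrow : ∀ u, ∑ v, P u v = 1)
    (hirr : ∀ u v, Relation.ReflTransGen (fun a b => 0 < P a b) u v)
    (pi : V → ℝ) (hpos : ∀ v, 0 < pi v) (hinv : ∀ v, ∑ u, pi u * P u v = pi v)
    (μ : V → Measure (ℕ → V)) (hprob : ∀ v, IsProbabilityMeasure (μ v))
    (hchain : ∀ (v : V) (n : ℕ) (path : Fin (n + 1) → V), path 0 = v →
      μ v {ω | ∀ i : Fin (n + 1), ω i.val = path i} =
        ENNReal.ofReal (∏ i : Fin n, P (path i.castSucc) (path i.succ)))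
    (z : V) :
    ∑' n : ℕ, μ z {ω | (n : ℕ∞) < hitTimePos {z} ω} =
      ENNReal.ofReal ((∑ v, pi v) / pi z) :=
  stmt2_general P hnonneg hrow hirr pi hpos hinv μ hprob hchain z
end

section
/- Let β > 1, s ≥ 1, and let z = (x,y) be a vertex and z₀ = (x₀,y₀) with x₀ ≥ x − s, connected to z by a self-avoiding path q of at most s² edges, each edge having weight at least β^{x−s} (so resistance at most β^{s−x}). If the effective resistance from z₀ to infinity is at most 2β^{−x₀}/(β−1), then the effective resistance from z to infinity is at most β^{−x}(s²β^s + 2β^s/(β−1)), and the return probability of the weighted walk from z satisfies P(return to z) ≤ 1 − φ(s)^{−1} where φ(s) = β^s(s² + 2/(β−1))(3+β). -/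
theorem le_zpow_neg_mul_of_le_add {β : ℝ} (hβ : 1 < β) {s x x₀ : ℤ} (hx₀ : x - s ≤ x₀)
    {c a b R : ℝ} (ha : a ≤ c * β ^ (s - x)) (hb : b ≤ 2 * β ^ (-x₀) / (β - 1))
    (hR : R ≤ a + b) :
    R ≤ β ^ (-x) * (c * β ^ s + 2 * β ^ s / (β - 1)) := by
  have hb' : b ≤ 2 * β ^ (s - x) / (β - 1) := by
    refine hb.trans ?_
    have : 0 < β - 1 := sub_pos.mpr hβ
    gcongr
    · exact hβ.le
    · omega
  calc R ≤ c * β ^ (s - x) + 2 * β ^ (s - x) / (β - 1) := by linarith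
    _ = β ^ (-x) * (c * β ^ s + 2 * β ^ s / (β - 1)) := by
      rw [sub_eq_neg_add, zpow_add₀ (by positivity)]
      ring

theorem one_sub_inv_div_le_one_sub_inv {R π φ : ℝ} (hR : 0 < R) (hπ : 0 < π)
    (h : R * π ≤ φ) : 1 - R⁻¹ / π ≤ 1 - φ⁻¹ := by
  rw [div_eq_mul_inv, ← mul_inv, sub_le_sub_iff_left]
  exact inv_anti₀ (by positivity) h

theorem stmt19_general (β : ℝ) (hβ : 1 < β) (s : ℕ)
    (x x₀ : ℤ) (hx₀ : x - s ≤ x₀)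
    (Rzz0 Rz0inf Rzinf piz Czinf ret : ℝ)
    (hRzz0 : Rzz0 ≤ (s : ℝ) ^ 2 * β ^ ((s : ℤ) - x))
    (hRz0inf : Rz0inf ≤ 2 * β ^ (-x₀) / (β - 1))
    (hseries : Rzinf ≤ Rzz0 + Rz0inf)
    (hRpos : 0 < Rzinf)
    (hpi : piz ≤ β ^ x * (3 + β)) (hpipos : 0 < piz)
    (hC : Czinf = Rzinf⁻¹)
    (hret : ret = 1 - Czinf / piz) :
    Rzinf ≤ β ^ (-x) * ((s : ℝ) ^ 2 * β ^ (s : ℤ) + 2 * β ^ (s : ℤ) / (β - 1)) ∧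
    ret ≤ 1 - (β ^ (s : ℤ) * ((s : ℝ) ^ 2 + 2 / (β - 1)) * (3 + β))⁻¹ := by
  have hR := le_zpow_neg_mul_of_le_add hβ hx₀ hRzz0 hRz0inf hseries
  refine ⟨hR, ?_⟩
  rw [hret, hC]
  apply one_sub_inv_div_le_one_sub_inv hRpos hpipos
  have hβx : β ^ (-x) * β ^ x = 1 := by
    rw [← zpow_add₀ (by positivity), neg_add_cancel, zpow_zero]
  calc Rzinf * piz
      ≤ β ^ (-x) * ((s : ℝ) ^ 2 * β ^ (s : ℤ) + 2 * β ^ (s : ℤ) / (β - 1)) * (β ^ x * (3 + β)) :=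
        mul_le_mul hR hpi hpipos.le (hRpos.le.trans hR)
    _ = β ^ (s : ℤ) * ((s : ℝ) ^ 2 + 2 / (β - 1)) * (3 + β) := by
      linear_combination ((s : ℝ) ^ 2 * β ^ (s : ℤ) + 2 * β ^ (s : ℤ) / (β - 1)) * (3 + β) * hβx

/-- If `z = (x,y)` lies in a trap of size at most `s`, connected to a good point
`z₀ = (x₀,y₀)` (with `x₀ ≥ x − s`) by a path of resistance at most `s² β^{s−x}`, and
`R(z₀,∞) ≤ 2β^{−x₀}/(β−1)`, then `R(z,∞) ≤ β^{−x}(s²β^s + 2β^s/(β−1))` and the return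
probability `1 − C(z,∞)/π(z)` is at most `1 − φ(s)⁻¹`, where
`φ(s) = β^s (s² + 2/(β−1)) (3+β)`. -/
theorem stmt19 (β : ℝ) (hβ : 1 < β) (s : ℕ) (hs : 1 ≤ s)
    (x x₀ : ℤ) (hx₀ : x - s ≤ x₀)
    (Rzz0 Rz0inf Rzinf piz Czinf ret : ℝ)
    (hRzz0 : Rzz0 ≤ (s : ℝ) ^ 2 * β ^ ((s : ℤ) - x))
    (hRz0inf : Rz0inf ≤ 2 * β ^ (-x₀) / (β - 1))
    (hseries : Rzinf ≤ Rzz0 + Rz0inf)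
    (hRpos : 0 < Rzinf)
    (hpi : piz ≤ β ^ x * (3 + β)) (hpipos : 0 < piz)
    (hC : Czinf = Rzinf⁻¹)
    (hret : ret = 1 - Czinf / piz) :
    Rzinf ≤ β ^ (-x) * ((s : ℝ) ^ 2 * β ^ (s : ℤ) + 2 * β ^ (s : ℤ) / (β - 1)) ∧
    ret ≤ 1 - (β ^ (s : ℤ) * ((s : ℝ) ^ 2 + 2 / (β - 1)) * (3 + β))⁻¹ :=
  stmt19_general β hβ s x x₀ hx₀ Rzz0 Rz0inf Rzinf piz Czinf ret hRzz0 hRz0inf hseries hRpos hpi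
    hpipos hC hret
end
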